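/- Let k be a field of characteristic 0 and U = k⟨⟨X₀,X₁⟩⟩. The bracket {ψ₁,ψ₂} = d_{ψ₂}(ψ₁) − d_{ψ₁}(ψ₂) − [ψ₁,ψ₂] (where d_ψ is the derivation with d_ψ(X₀)=0, d_ψ(X₁)=[X₁,ψ]) makes U into a Lie algebra: it is bilinear, alternating, and satisfies the Jacobi identity. -/

import Mathlib

/-! `d_ψ` is a derivation of the free algebra, and a derivation of a free algebra is determined
by its values on the generators. Comparing values on `X₀, X₁` shows that `ψ ↦ d_ψ` is linear and
that `d_{{ψ₁,ψ₂}} = [d_{ψ₂}, d_{ψ₁}]`. Hence `s_ψ = ψ· + d_ψ` satisfies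
`s_{{ψ₁,ψ₂}} = [s_{ψ₂}, s_{ψ₁}]`, and since `s_ψ(1) = ψ` the Jacobi identity for `{·,·}` is the
image of the Jacobi identity for commutators of operators. That `d_ψ`, defined by its values on
monomials, is a derivation follows by comparing it with the second component of the algebra map
into the square-zero extension `U ⊕ εU` sending `Xᵢ` to `Xᵢ + ε d_ψ(Xᵢ)`. -/

noncomputable section

variable (k : Type) [Field k] [CharZero k]

abbrev U := FreeAlgebra k (Fin 2)

def X0 : U k := FreeAlgebra.ι k 0
def X1 : U k := FreeAlgebra.ι k 1

def derOn (g : Fin 2 → U k) : U k →ₗ[k] U k :=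
  (FreeAlgebra.basisFreeMonoid k (Fin 2)).constr k fun w =>
    ∑ i ∈ Finset.range (FreeMonoid.toList w).length,
      (((FreeMonoid.toList w).take i).map (FreeAlgebra.ι k)).prod *
        g ((FreeMonoid.toList w).getD i 0) *
        (((FreeMonoid.toList w).drop (i + 1)).map (FreeAlgebra.ι k)).prod

/-- `d_ψ`. -/
def dF (ψ : U k) : U k →ₗ[k] U k := derOn k ![0, X1 k * ψ - ψ * X1 k]

/-- `s_ψ(v) = ψ·v + d_ψ(v)`. -/
def sF (ψ : U k) (v : U k) : U k := ψ * v + dF k ψ v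

/-- The Ihara-type bracket `{ψ₁,ψ₂} = d_{ψ₂}(ψ₁) − d_{ψ₁}(ψ₂) − [ψ₁,ψ₂]`. -/
def br (ψ₁ ψ₂ : U k) : U k := dF k ψ₂ ψ₁ - dF k ψ₁ ψ₂ - (ψ₁ * ψ₂ - ψ₂ * ψ₁)

end

/-- Mathlib's `Derivation` requires a commutative algebra. -/
def IsDerivation {R A : Type*} [CommSemiring R] [Ring A] [Algebra R A] (D : A →ₗ[R] A) : Prop :=
  ∀ u v, D (u * v) = D u * v + u * D v

namespace IsDerivation

variable {R A : Type*} [CommSemiring R] [Ring A] [Algebra R A] {D D₁ D₂ : A →ₗ[R] A}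

lemma map_one (hD : IsDerivation D) : D 1 = 0 := by
  have h := hD 1 1
  rw [mul_one, one_mul, mul_one] at h
  exact left_eq_add.mp h

lemma add (h₁ : IsDerivation D₁) (h₂ : IsDerivation D₂) : IsDerivation (D₁ + D₂) :=
  fun u v => by
    simp only [LinearMap.add_apply, h₁ u v, h₂ u v, add_mul, mul_add]
    abel

lemma smul (hD : IsDerivation D) (r : R) : IsDerivation (r • D) :=
  fun u v => by simp only [LinearMap.smul_apply, hD u v, smul_add, smul_mul_assoc, mul_smul_comm]

lemma commutator (h₁ : IsDerivation D₁) (h₂ : IsDerivation D₂) :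
    IsDerivation (D₁ * D₂ - D₂ * D₁) :=
  fun u v => by
    simp only [LinearMap.sub_apply, Module.End.mul_apply, map_add, h₁ _ _, h₂ _ _]
    noncomm_ring

lemma map_list_prod {ι : Type*} (hD : IsDerivation D) (f : ι → A) (x₀ : ι) (l : List ι) :
    D (l.map f).prod = ∑ i ∈ Finset.range l.length,
      ((l.take i).map f).prod * D (f (l.getD i x₀)) * ((l.drop (i + 1)).map f).prod := by
  induction l with
  | nil => simp [hD.map_one]
  | cons x l ih =>
    rw [List.map_cons, List.prod_cons, hD, ih, List.length_cons, Finset.sum_range_succ',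
      add_comm, Finset.mul_sum]
    simp [mul_assoc]

end IsDerivation

namespace FreeAlgebra

variable {R X : Type*} [CommRing R]

lemma isDerivation_ext {D₁ D₂ : FreeAlgebra R X →ₗ[R] FreeAlgebra R X}
    (h₁ : IsDerivation D₁) (h₂ : IsDerivation D₂) (h : ∀ x, D₁ (ι R x) = D₂ (ι R x)) :
    D₁ = D₂ := by
  ext v
  induction v using FreeAlgebra.induction with
  | grade0 r => simp [Algebra.algebraMap_eq_smul_one, h₁.map_one, h₂.map_one]
  | grade1 x => exact h x
  | mul u v hu hv => rw [h₁, h₂, hu, hv]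
  | add u v hu hv => rw [map_add, map_add, hu, hv]

open TrivSqZeroExt in
/-- An algebra map `A → A ⊕ εA` (with `ε² = 0`) lifting the identity has the form
`v ↦ v + ε D v` for a derivation `D`. -/
noncomputable def liftSqZero (g : X → FreeAlgebra R X) :
    FreeAlgebra R X →ₐ[R] TrivSqZeroExt (FreeAlgebra R X) (FreeAlgebra R X) :=
  lift R fun x => inl (ι R x) + inr (g x)

lemma fst_liftSqZero (g : X → FreeAlgebra R X) (v : FreeAlgebra R X) :
    (liftSqZero g v).fst = v := by
  have : (TrivSqZeroExt.fstHom R _ _).comp (liftSqZero g) = AlgHom.id R _ := by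
    ext; simp [liftSqZero]
  exact DFunLike.congr_fun this v

noncomputable def derivationLift (g : X → FreeAlgebra R X) :
    FreeAlgebra R X →ₗ[R] FreeAlgebra R X where
  toFun v := (liftSqZero g v).snd
  map_add' _ _ := by simp
  map_smul' _ _ := by simp

lemma isDerivation_derivationLift (g : X → FreeAlgebra R X) :
    IsDerivation (derivationLift g) := fun u v => by
  simp [derivationLift, fst_liftSqZero, add_comm]

@[simp]
lemma derivationLift_ι (g : X → FreeAlgebra R X) (x : X) : derivationLift g (ι R x) = g x := by
  simp [derivationLift, liftSqZero]

lemma basisFreeMonoid_apply (w : FreeMonoid X) :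
    basisFreeMonoid R X w = FreeMonoid.lift (ι R) w := by
  simp [basisFreeMonoid, equivMonoidAlgebraFreeMonoid]

end FreeAlgebra

lemma commutator_jacobi {A : Type*} [Ring A] (x y z : A) :
    (z * y - y * z) * x - x * (z * y - y * z) + ((x * z - z * x) * y - y * (x * z - z * x)) +
      ((y * x - x * y) * z - z * (y * x - x * y)) = 0 := by
  noncomm_ring

noncomputable section

variable (k : Type) [Field k]

open FreeAlgebra

lemma derOn_eq_derivationLift (g : Fin 2 → U k) : derOn k g = derivationLift g :=
  (basisFreeMonoid k (Fin 2)).ext fun w => by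
    rw [derOn, Module.Basis.constr_basis, basisFreeMonoid_apply, FreeMonoid.lift_apply,
      (isDerivation_derivationLift g).map_list_prod _ 0]
    simp only [derivationLift_ι]

lemma isDerivation_dF (ψ : U k) : IsDerivation (dF k ψ) := by
  rw [dF, derOn_eq_derivationLift]
  exact isDerivation_derivationLift _

lemma dF_X0 (ψ : U k) : dF k ψ (X0 k) = 0 := by
  simp [dF, derOn_eq_derivationLift, X0]

lemma dF_X1 (ψ : U k) : dF k ψ (X1 k) = X1 k * ψ - ψ * X1 k := by
  simp [dF, derOn_eq_derivationLift, X1]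

lemma eq_dF_of_isDerivation {D : U k →ₗ[k] U k} {ψ : U k} (hD : IsDerivation D)
    (h₀ : D (X0 k) = 0) (h₁ : D (X1 k) = X1 k * ψ - ψ * X1 k) : D = dF k ψ := by
  refine isDerivation_ext hD (isDerivation_dF k ψ) fun i => ?_
  fin_cases i
  · exact h₀.trans (dF_X0 k ψ).symm
  · exact h₁.trans (dF_X1 k ψ).symm

lemma dF_add (a b : U k) : dF k (a + b) = dF k a + dF k b := by
  refine (eq_dF_of_isDerivation k ((isDerivation_dF k a).add (isDerivation_dF k b)) ?_ ?_).symm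
  · simp [dF_X0]
  · simp only [LinearMap.add_apply, dF_X1, mul_add, add_mul]
    abel

lemma dF_smul (r : k) (a : U k) : dF k (r • a) = r • dF k a := by
  refine (eq_dF_of_isDerivation k ((isDerivation_dF k a).smul r) ?_ ?_).symm
  · simp [dF_X0]
  · simp [dF_X1, smul_sub]

lemma dF_br (a b : U k) : dF k (br k a b) = dF k b * dF k a - dF k a * dF k b := by
  refine (eq_dF_of_isDerivation k ((isDerivation_dF k b).commutator (isDerivation_dF k a))
    ?_ ?_).symm
  · simp [dF_X0]
  · simp only [LinearMap.sub_apply, Module.End.mul_apply, dF_X1, br, map_sub,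
      isDerivation_dF k _ _ _]
    noncomm_ring

/-- `sF`, bundled as a linear map in both arguments. -/
def sEnd : U k →ₗ[k] Module.End k (U k) where
  toFun ψ := LinearMap.mulLeft k ψ + dF k ψ
  map_add' a b := by
    ext v
    simp only [dF_add, LinearMap.add_apply, LinearMap.mulLeft_apply, add_mul]
    abel
  map_smul' r a := by
    ext v
    simp [dF_smul]

lemma sEnd_apply_one (ψ : U k) : sEnd k ψ 1 = ψ := by
  simp [sEnd, (isDerivation_dF k ψ).map_one]

lemma sEnd_br (a b : U k) : sEnd k (br k a b) =
    sEnd k b * sEnd k a - sEnd k a * sEnd k b := by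
  ext v
  simp only [sEnd, LinearMap.coe_mk, AddHom.coe_mk, LinearMap.add_apply, dF_br]
  simp only [br, LinearMap.add_apply, LinearMap.sub_apply, Module.End.mul_apply,
    LinearMap.mulLeft_apply, map_add, isDerivation_dF k _ _ _]
  noncomm_ring

lemma br_swap (a b : U k) : br k b a = -br k a b := by
  simp only [br]
  abel

lemma br_add_smul_left (r : k) (a b c : U k) : br k (a + r • b) c = br k a c + r • br k b c := by
  simp only [br, dF_add, dF_smul, LinearMap.add_apply, LinearMap.smul_apply, map_add, map_smul,
    add_mul, mul_add, smul_mul_assoc, mul_smul_comm, smul_sub]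
  abel

variable [CharZero k]

theorem br_lie_algebra :
    (∀ (r : k) (a b c : U k),
        br k (a + r • b) c = br k a c + r • br k b c ∧
        br k a (b + r • c) = br k a b + r • br k a c) ∧
    (∀ a : U k, br k a a = 0) ∧
    (∀ a b c : U k, br k a (br k b c) + br k b (br k c a) + br k c (br k a b) = 0) := by
  refine ⟨fun r a b c => ⟨br_add_smul_left k r a b c, ?_⟩, fun a => ?_, fun a b c => ?_⟩
  · rw [br_swap, br_add_smul_left, neg_add, ← smul_neg, ← br_swap, ← br_swap]
  · simp [br]
  · rw [← sEnd_apply_one k (_ + _ + _)]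
    simp only [map_add, sEnd_br, commutator_jacobi, LinearMap.zero_apply]

end
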